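/- Let H(t,ξ) be the Zaremba Green function of the lower half-plane, fix ξ with Im ξ < 0 and ξ ≠ 0, and fix μ with −1/2 < μ < 0. Let U be a complex-valued C¹ function on the punctured closed lower half-disc {t : Im t ≤ 0, 0 < |t| ≤ |ξ|/2} such that U(t) = o(|t|^μ) and the radial derivative satisfies (∂/∂ρ)U(ρ e^{iθ}) = o(ρ^{μ−1}) as ρ → 0, uniformly in θ ∈ [−π, 0]. Then the boundary integral over the small semicircular arc Γ_δ = {δ e^{iθ} : −π ≤ θ ≤ 0} tends to zero: ∫_{−π}^{0} [ U(δ e^{iθ}) (∂/∂ρ)H(δ e^{iθ}, ξ) − H(δ e^{iθ}, ξ) (∂/∂ρ)U(δ e^{iθ}) ] δ dθ → 0 as δ → 0⁺. -/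

import Mathlib

/-!
On the arc `t = ρ e^{iθ}` put `s = √ρ`, so that `√t = s e^{iθ/2}`.
Since `t - ξ = (√t - √ξ)(√t + √ξ)`, `H` becomes a signed sum of four terms `log |s e^{iθ/2} - a|` with `|a| = √|ξ|`; it vanishes at
`s = 0` and its `s`-derivative is bounded for `s ≤ √|ξ|/2`, uniformly in `θ`. Hence
`H = O(√δ)` and `∂H/∂ρ = O(δ^{-1/2})` on the arc, the integrand is `O(δ^{μ + 1/2})`,
and `μ > -1/2` makes this tend to `0`.
-/

open Complex Real

/-- The branch angle in [-π, π): equals `Complex.arg` except that angle π is mapped to -π. -/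
noncomputable def branchAngle (w : ℂ) : ℝ :=
  if Complex.arg w = Real.pi then -Real.pi else Complex.arg w

/-- Square root branch √w = √ρ e^{iθ/2} with θ ∈ [-π, π), and √0 = 0. -/
noncomputable def zsqrt (w : ℂ) : ℂ :=
  (Real.sqrt (‖w‖) : ℂ) * Complex.exp (Complex.I * (branchAngle w / 2))

/-- The Zaremba Green function of the lower half-plane. -/
noncomputable def ZH (t ξ : ℂ) : ℝ :=
  -(1 / (2 * Real.pi)) *
    (Real.log (‖t - ξ‖) + Real.log (‖t - (starRingEnd ℂ) ξ‖)
      - 2 * Real.log (‖zsqrt t + zsqrt ξ‖)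
      - 2 * Real.log (‖zsqrt t - zsqrt ((starRingEnd ℂ) ξ)‖))

/-- Radial derivative in ρ of H(ρe^{iθ}, ξ). -/
noncomputable def ZHrad (ξ : ℂ) (θ ρ : ℝ) : ℝ :=
  deriv (fun r : ℝ => ZH ((r : ℂ) * Complex.exp (Complex.I * θ)) ξ) ρ

/-- Radial derivative in ρ of a function U evaluated at ρe^{iθ}. -/
noncomputable def radDeriv (U : ℂ → ℂ) (θ ρ : ℝ) : ℂ :=
  deriv (fun r : ℝ => U ((r : ℂ) * Complex.exp (Complex.I * θ))) ρ

open scoped InnerProductSpace ComplexConjugate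

section LogNorm

variable {F : Type*} [NormedAddCommGroup F] [InnerProductSpace ℝ F]

theorem HasDerivAt.log_norm {f : ℝ → F} {f' : F} {x : ℝ} (hf : HasDerivAt f f' x)
    (hx : f x ≠ 0) :
    HasDerivAt (fun s => Real.log ‖f s‖) (⟪f x, f'⟫_ℝ / ‖f x‖ ^ 2) x := by
  have hlog : (fun s => Real.log ‖f s‖) = fun s => Real.log (‖f s‖ ^ 2) / 2 := by
    funext s
    rw [Real.log_pow]
    push_cast
    ring
  rw [hlog]
  exact ((hf.norm_sq.log (by positivity)).div_const 2).congr_deriv (by ring)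

lemma exists_hasDerivAt_log_norm_smul_sub {c a : F} (hc : ‖c‖ = 1) {m s : ℝ} (hm : 0 < m)
    (ha : m ≤ ‖a‖) (hs : |s| ≤ m / 2) :
    ∃ d, HasDerivAt (fun s : ℝ => Real.log ‖s • c - a‖) d s ∧ |d| ≤ 2 / m := by
  have hfar : m / 2 ≤ ‖s • c - a‖ := by
    have := norm_sub_norm_le a (s • c)
    rw [norm_sub_rev, norm_smul, hc, mul_one, Real.norm_eq_abs] at this
    linarith
  have hpos : 0 < ‖s • c - a‖ := by linarith
  refine ⟨_, (((hasDerivAt_id s).smul_const c).sub_const a).log_norm (norm_pos_iff.mp hpos), ?_⟩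
  calc |⟪s • c - a, (1 : ℝ) • c⟫_ℝ / ‖s • c - a‖ ^ 2|
      ≤ ‖s • c - a‖ / ‖s • c - a‖ ^ 2 := by
        rw [abs_div, abs_of_pos (pow_pos hpos 2), one_smul]
        gcongr
        simpa [hc] using abs_real_inner_le_norm (s • c - a) c
    _ = (‖s • c - a‖)⁻¹ := by field_simp
    _ ≤ (m / 2)⁻¹ := inv_anti₀ (by linarith) hfar
    _ = 2 / m := inv_div m 2

end LogNorm

lemma norm_exp_I_mul_half (θ : ℝ) : ‖exp (I * (θ / 2))‖ = 1 := by
  simpa using norm_exp_I_mul_ofReal (θ / 2)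

lemma norm_ofReal_mul_exp_I {ρ : ℝ} (hρ : 0 ≤ ρ) (θ : ℝ) : ‖(ρ : ℂ) * exp (I * θ)‖ = ρ := by
  rw [norm_mul, norm_exp_I_mul_ofReal, mul_one, norm_real, Real.norm_of_nonneg hρ]

lemma im_ofReal_mul_exp_I (ρ θ : ℝ) : ((ρ : ℂ) * exp (I * θ)).im = ρ * Real.sin θ := by
  rw [mul_comm I, exp_mul_I]
  simp [← ofReal_cos, ← ofReal_sin]

lemma exp_I_mul_branchAngle (w : ℂ) : exp (I * branchAngle w) = exp (I * arg w) := by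
  rw [branchAngle]
  split_ifs with h
  · rw [h, ofReal_neg, mul_neg, Complex.exp_neg, mul_comm I, exp_pi_mul_I]
    norm_num
  · rfl

lemma zsqrt_sq (w : ℂ) : zsqrt w ^ 2 = w := by
  rw [zsqrt, mul_pow, ← Complex.exp_nat_mul, ← ofReal_pow, Real.sq_sqrt (norm_nonneg w),
    show ((2 : ℕ) : ℂ) * (I * (branchAngle w / 2)) = I * branchAngle w by push_cast; ring,
    exp_I_mul_branchAngle, mul_comm I]
  exact norm_mul_exp_arg_mul_I w

lemma norm_zsqrt (w : ℂ) : ‖zsqrt w‖ = √‖w‖ := by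
  rw [zsqrt, norm_mul, norm_exp_I_mul_half, mul_one, norm_real,
    Real.norm_of_nonneg (Real.sqrt_nonneg _)]

lemma branchAngle_ofReal_mul_exp_I {ρ θ : ℝ} (hρ : 0 < ρ) (hθ₁ : -π ≤ θ) (hθ₂ : θ < π) :
    branchAngle ((ρ : ℂ) * exp (I * θ)) = θ := by
  rw [branchAngle, arg_real_mul _ hρ, mul_comm I, arg_exp_mul_I]
  rcases hθ₁.eq_or_lt with rfl | hθ₁
  · rw [toIocMod_apply_left, if_pos (by ring)]
  · rw [(toIocMod_eq_self _).mpr ⟨hθ₁, by linarith⟩, if_neg hθ₂.ne]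

lemma zsqrt_ofReal_mul_exp_I {ρ θ : ℝ} (hρ : 0 ≤ ρ) (hθ₁ : -π ≤ θ) (hθ₂ : θ < π) :
    zsqrt ((ρ : ℂ) * exp (I * θ)) = (√ρ : ℂ) * exp (I * (θ / 2)) := by
  rcases hρ.eq_or_lt with rfl | hρ
  · simp [zsqrt]
  rw [zsqrt, norm_ofReal_mul_exp_I hρ.le, branchAngle_ofReal_mul_exp_I hρ hθ₁ hθ₂]

lemma log_norm_sub_eq {t w : ℂ} (h : t ≠ w) :
    Real.log ‖t - w‖ = Real.log ‖zsqrt t - zsqrt w‖ + Real.log ‖zsqrt t + zsqrt w‖ := by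
  have hfac : t - w = (zsqrt t - zsqrt w) * (zsqrt t + zsqrt w) := by
    linear_combination -zsqrt_sq t + zsqrt_sq w
  have hne := hfac ▸ sub_ne_zero.mpr h
  rw [hfac, norm_mul, Real.log_mul (norm_ne_zero_iff.mpr (left_ne_zero_of_mul hne))
    (norm_ne_zero_iff.mpr (right_ne_zero_of_mul hne))]

noncomputable def rayGreen (ξ c : ℂ) (s : ℝ) : ℝ :=
  -(1 / (2 * π)) * (Real.log ‖s • c - zsqrt ξ‖ - Real.log ‖s • c + zsqrt ξ‖
    + Real.log ‖s • c + zsqrt (conj ξ)‖ - Real.log ‖s • c - zsqrt (conj ξ)‖)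

lemma rayGreen_zero (ξ c : ℂ) : rayGreen ξ c 0 = 0 := by
  simp [rayGreen]

lemma exists_hasDerivAt_rayGreen {ξ c : ℂ} (hξ : ξ ≠ 0) (hc : ‖c‖ = 1) {s : ℝ}
    (hs : |s| ≤ √‖ξ‖ / 2) :
    ∃ d, HasDerivAt (rayGreen ξ c) d s ∧ |d| ≤ 4 / (π * √‖ξ‖) := by
  have hm : 0 < √‖ξ‖ := Real.sqrt_pos.mpr (norm_pos_iff.mpr hξ)
  have key : ∀ a : ℂ, ‖a‖ = √‖ξ‖ →
      ∃ d, HasDerivAt (fun s : ℝ => Real.log ‖s • c - a‖) d s ∧ |d| ≤ 2 / √‖ξ‖ :=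
    fun a ha => exists_hasDerivAt_log_norm_smul_sub hc hm ha.ge hs
  have hconj : ‖zsqrt (conj ξ)‖ = √‖ξ‖ := by rw [norm_zsqrt, norm_conj]
  obtain ⟨d₁, h₁, b₁⟩ := key _ (norm_zsqrt ξ)
  obtain ⟨d₂, h₂, b₂⟩ := key (-zsqrt ξ) (by rw [norm_neg, norm_zsqrt])
  obtain ⟨d₃, h₃, b₃⟩ := key (-zsqrt (conj ξ)) (by rw [norm_neg, hconj])
  obtain ⟨d₄, h₄, b₄⟩ := key _ hconj
  simp only [sub_neg_eq_add] at h₂ h₃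
  refine ⟨_, (((h₁.sub h₂).add h₃).sub h₄).const_mul (-(1 / (2 * π))), ?_⟩
  rw [abs_mul, abs_neg, abs_of_pos (by positivity)]
  calc 1 / (2 * π) * |d₁ - d₂ + d₃ - d₄| ≤ 1 / (2 * π) * (4 * (2 / √‖ξ‖)) := by
        gcongr
        rw [abs_le] at b₁ b₂ b₃ b₄ ⊢
        constructor <;> linarith
    _ = 4 / (π * √‖ξ‖) := by field_simp

lemma abs_rayGreen_le {ξ c : ℂ} (hξ : ξ ≠ 0) (hc : ‖c‖ = 1) {s : ℝ} (hs₀ : 0 ≤ s)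
    (hs : s ≤ √‖ξ‖ / 2) :
    |rayGreen ξ c s| ≤ 4 / (π * √‖ξ‖) * s := by
  have hI : ∀ x ∈ Set.Icc 0 (√‖ξ‖ / 2), ∃ d, HasDerivAt (rayGreen ξ c) d x ∧
      |d| ≤ 4 / (π * √‖ξ‖) := fun x hx =>
    exists_hasDerivAt_rayGreen hξ hc (by rw [abs_of_nonneg hx.1]; exact hx.2)
  have hmvt := (convex_Icc 0 (√‖ξ‖ / 2)).norm_image_sub_le_of_norm_deriv_le
    (fun x hx => (hI x hx).elim fun _ h => h.1.differentiableAt)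
    (fun x hx => (hI x hx).elim fun _ h => h.1.deriv ▸ h.2)
    ⟨le_rfl, by positivity⟩ ⟨hs₀, hs⟩
  simpa [rayGreen_zero, abs_of_nonneg hs₀] using hmvt

lemma ZH_eq_rayGreen {ξ : ℂ} {ρ θ : ℝ} (hρ : 0 ≤ ρ) (hρξ : ρ < ‖ξ‖) (hθ₁ : -π ≤ θ)
    (hθ₂ : θ < π) :
    ZH ((ρ : ℂ) * exp (I * θ)) ξ = rayGreen ξ (exp (I * (θ / 2))) √ρ := by
  have ht : ‖(ρ : ℂ) * exp (I * θ)‖ < ‖ξ‖ := by rwa [norm_ofReal_mul_exp_I hρ]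
  have hξ : (ρ : ℂ) * exp (I * θ) ≠ ξ := by rintro h; rw [h] at ht; exact ht.false
  have hξ' : (ρ : ℂ) * exp (I * θ) ≠ conj ξ := by
    rintro h; rw [h, norm_conj] at ht; exact ht.false
  rw [ZH, log_norm_sub_eq hξ, log_norm_sub_eq hξ', rayGreen, zsqrt_ofReal_mul_exp_I hρ hθ₁ hθ₂,
    real_smul]
  ring

lemma sqrt_le_half_sqrt_norm {ξ : ℂ} {ρ : ℝ} (hρξ : ρ ≤ ‖ξ‖ / 4) : √ρ ≤ √‖ξ‖ / 2 := by
  rw [Real.sqrt_le_left (by positivity), div_pow, Real.sq_sqrt (norm_nonneg _)]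
  linarith

lemma abs_ZH_le {ξ : ℂ} (hξ : ξ ≠ 0) {ρ θ : ℝ} (hρ : 0 ≤ ρ) (hρξ : ρ ≤ ‖ξ‖ / 4)
    (hθ₁ : -π ≤ θ) (hθ₂ : θ < π) :
    |ZH ((ρ : ℂ) * exp (I * θ)) ξ| ≤ 4 / (π * √‖ξ‖) * √ρ := by
  rw [ZH_eq_rayGreen hρ (by linarith [norm_pos_iff.mpr hξ]) hθ₁ hθ₂]
  exact abs_rayGreen_le hξ (norm_exp_I_mul_half θ) (Real.sqrt_nonneg ρ)
    (sqrt_le_half_sqrt_norm hρξ)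

lemma abs_ZHrad_le {ξ : ℂ} (hξ : ξ ≠ 0) {ρ θ : ℝ} (hρ : 0 < ρ) (hρξ : ρ ≤ ‖ξ‖ / 4)
    (hθ₁ : -π ≤ θ) (hθ₂ : θ < π) :
    |ZHrad ξ θ ρ| ≤ 4 / (π * √‖ξ‖) / (2 * √ρ) := by
  have hρξ' : ρ < ‖ξ‖ := by linarith [norm_pos_iff.mpr hξ]
  obtain ⟨d, hd, hdb⟩ := exists_hasDerivAt_rayGreen hξ (norm_exp_I_mul_half θ)
    ((abs_of_nonneg (Real.sqrt_nonneg ρ)).trans_le (sqrt_le_half_sqrt_norm hρξ))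
  have heq : (fun r : ℝ => ZH ((r : ℂ) * exp (I * θ)) ξ)
      =ᶠ[nhds ρ] rayGreen ξ (exp (I * (θ / 2))) ∘ Real.sqrt := by
    filter_upwards [Ioo_mem_nhds hρ hρξ'] with r hr
    exact ZH_eq_rayGreen hr.1.le hr.2 hθ₁ hθ₂
  rw [ZHrad, heq.deriv_eq, (hd.comp ρ (Real.hasDerivAt_sqrt hρ.ne')).deriv, abs_mul,
    abs_of_pos (one_div_pos.mpr (mul_pos two_pos (Real.sqrt_pos.mpr hρ))), ← div_eq_mul_one_div]
  gcongr

lemma norm_arc_integrand_le {u u' : ℂ} {h h' δ μ A C : ℝ} (hδ : 0 < δ)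
    (hu : ‖u‖ ≤ A * δ ^ μ) (hu' : ‖u'‖ ≤ A * δ ^ (μ - 1)) (hh : |h| ≤ C * √δ)
    (hh' : |h'| ≤ C / (2 * √δ)) :
    ‖(u * h' - h * u') * δ‖ ≤ 3 / 2 * A * C * δ ^ (μ + 1 / 2) := by
  have hsqrt : √δ = δ ^ (1 / 2 : ℝ) := Real.sqrt_eq_rpow δ
  have hsq : 0 < √δ := Real.sqrt_pos.mpr hδ
  have e₁ : δ ^ μ / (2 * √δ) * δ = δ ^ (μ + 1 / 2) / 2 := by
    rw [show μ + 1 / 2 = μ + 1 - 1 / 2 by ring, Real.rpow_sub hδ, Real.rpow_add hδ,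
      Real.rpow_one, ← hsqrt]
    field_simp
  have e₂ : √δ * δ ^ (μ - 1) * δ = δ ^ (μ + 1 / 2) := by
    rw [hsqrt, show μ + 1 / 2 = 1 / 2 + (μ - 1) + 1 by ring, Real.rpow_add hδ,
      Real.rpow_add hδ, Real.rpow_one]
  calc ‖(u * h' - h * u') * δ‖ ≤ (‖u‖ * |h'| + |h| * ‖u'‖) * δ := by
        rw [norm_mul, norm_real, Real.norm_of_nonneg hδ.le]
        gcongr
        refine (norm_sub_le _ _).trans_eq ?_
        rw [norm_mul, norm_mul, norm_real, norm_real, Real.norm_eq_abs, Real.norm_eq_abs]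
    _ ≤ (A * δ ^ μ * (C / (2 * √δ)) + C * √δ * (A * δ ^ (μ - 1))) * δ := by
        gcongr
        · exact (norm_nonneg u).trans hu
        · exact (abs_nonneg h).trans hh
    _ = 3 / 2 * A * C * δ ^ (μ + 1 / 2) := by
        linear_combination (A * C) * e₁ + (A * C) * e₂

lemma norm_apply_ofReal_mul_exp_I_le {U : ℂ → ℂ} {A μ r δ θ : ℝ}
    (hU : ∀ t : ℂ, t.im ≤ 0 → 0 < ‖t‖ → ‖t‖ < r → ‖U t‖ ≤ A * ‖t‖ ^ μ) (hδ : 0 < δ)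
    (hδr : δ < r) (hθ₁ : -π ≤ θ) (hθ₂ : θ ≤ 0) :
    ‖U ((δ : ℂ) * exp (I * θ))‖ ≤ A * δ ^ μ := by
  have hnorm := norm_ofReal_mul_exp_I hδ.le θ
  have him : ((δ : ℂ) * exp (I * θ)).im ≤ 0 := by
    rw [im_ofReal_mul_exp_I]
    exact mul_nonpos_of_nonneg_of_nonpos hδ.le (sin_nonpos_of_nonpos_of_neg_pi_le hθ₂ hθ₁)
  simpa only [hnorm] using hU _ him (by rwa [hnorm]) (by rwa [hnorm])

lemma tendsto_rpow_nhdsGT_zero {q : ℝ} (hq : 0 < q) :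
    Filter.Tendsto (fun x : ℝ => x ^ q) (nhdsWithin 0 (Set.Ioi 0)) (nhds 0) := by
  have := (continuousAt_rpow_const 0 q (Or.inr hq.le)).tendsto
  rw [zero_rpow hq.ne'] at this
  exact this.mono_left nhdsWithin_le_nhds

theorem small_arc_integral_tendsto_zero_general (ξ : ℂ) (hξ0 : ξ ≠ 0)
    (μ : ℝ) (hμ1 : -(1/2 : ℝ) < μ) (U : ℂ → ℂ)
    (hUo : ∀ ε > (0:ℝ), ∃ r > (0:ℝ), ∀ t : ℂ, t.im ≤ 0 → 0 < ‖t‖ →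
      ‖t‖ < r → ‖U t‖ ≤ ε * ‖t‖ ^ μ)
    (hUd : ∀ ε > (0:ℝ), ∃ r > (0:ℝ), ∀ ρ θ : ℝ, 0 < ρ → ρ < r → -Real.pi ≤ θ → θ ≤ 0 →
      ‖radDeriv U θ ρ‖ ≤ ε * ρ ^ (μ - 1)) :
    Filter.Tendsto
      (fun δ : ℝ => ∫ θ in (-Real.pi)..0,
        (U ((δ : ℂ) * Complex.exp (Complex.I * θ)) * (ZHrad ξ θ δ : ℂ) -
          (ZH ((δ : ℂ) * Complex.exp (Complex.I * θ)) ξ : ℂ) * radDeriv U θ δ) * (δ : ℂ))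
      (nhdsWithin 0 (Set.Ioi 0)) (nhds 0) := by
  obtain ⟨r₁, hr₁, hU⟩ := hUo 1 one_pos
  obtain ⟨r₂, hr₂, hU'⟩ := hUd 1 one_pos
  set C := 4 / (π * √‖ξ‖)
  have hpow := tendsto_rpow_nhdsGT_zero (q := μ + 1 / 2) (by linarith)
  refine squeeze_zero_norm' (a := fun δ => 3 / 2 * 1 * C * δ ^ (μ + 1 / 2) * π) ?_
    (by simpa using (hpow.const_mul (3 / 2 * 1 * C)).mul_const π)
  have hr : 0 < min (min r₁ r₂) (‖ξ‖ / 4) := by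
    have := norm_pos_iff.mpr hξ0
    positivity
  filter_upwards [Ioo_mem_nhdsGT hr] with δ ⟨hδ, hδr⟩
  simp only [lt_min_iff] at hδr
  refine (intervalIntegral.norm_integral_le_of_norm_le_const fun θ hθ => ?_).trans_eq
    (by rw [sub_neg_eq_add, zero_add, abs_of_pos pi_pos])
  obtain ⟨hθ₁, hθ₂⟩ : θ ∈ Set.Ioc (-π) 0 := by rwa [Set.uIoc_of_le (by linarith [pi_pos])] at hθ
  have hθπ : θ < π := by linarith [pi_pos]
  exact norm_arc_integrand_le hδ (norm_apply_ofReal_mul_exp_I_le hU hδ hδr.1.1 hθ₁.le hθ₂)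
    (hU' δ θ hδ hδr.1.2 hθ₁.le hθ₂) (abs_ZH_le hξ0 hδ.le hδr.2.le hθ₁.le hθπ)
    (abs_ZHrad_le hξ0 hδ hδr.2.le hθ₁.le hθπ)

/-- Let ξ ≠ 0 with Im ξ < 0 and −1/2 < μ < 0.  If U is C¹ on the punctured
closed lower half-disc of radius |ξ|/2, with U(t) = o(|t|^μ) and radial derivative
o(ρ^{μ−1}) uniformly in θ ∈ [−π,0], then the Green-identity boundary integral over the
small semicircular arc Γ_δ tends to 0 as δ → 0⁺. -/
theorem small_arc_integral_tendsto_zero (ξ : ℂ) (hξim : ξ.im < 0) (hξ0 : ξ ≠ 0)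
    (μ : ℝ) (hμ1 : -(1/2 : ℝ) < μ) (hμ2 : μ < 0) (U : ℂ → ℂ)
    (hU : ContDiffOn ℝ 1 U
      {t : ℂ | t.im ≤ 0 ∧ 0 < ‖t‖ ∧ ‖t‖ ≤ ‖ξ‖ / 2})
    (hUo : ∀ ε > (0:ℝ), ∃ r > (0:ℝ), ∀ t : ℂ, t.im ≤ 0 → 0 < ‖t‖ →
      ‖t‖ < r → ‖U t‖ ≤ ε * ‖t‖ ^ μ)
    (hUd : ∀ ε > (0:ℝ), ∃ r > (0:ℝ), ∀ ρ θ : ℝ, 0 < ρ → ρ < r → -Real.pi ≤ θ → θ ≤ 0 →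
      ‖radDeriv U θ ρ‖ ≤ ε * ρ ^ (μ - 1)) :
    Filter.Tendsto
      (fun δ : ℝ => ∫ θ in (-Real.pi)..0,
        (U ((δ : ℂ) * Complex.exp (Complex.I * θ)) * (ZHrad ξ θ δ : ℂ) -
          (ZH ((δ : ℂ) * Complex.exp (Complex.I * θ)) ξ : ℂ) * radDeriv U θ δ) * (δ : ℂ))
      (nhdsWithin 0 (Set.Ioi 0)) (nhds 0) :=
  small_arc_integral_tendsto_zero_general ξ hξ0 μ hμ1 U hUo hUd
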